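/- Let T_1, …, T_k be rooted trees and α_1, …, α_k positive integers. Let T_0 be the rooted tree whose root has ∑_j α_j children, such that for each j exactly α_j of the root-child subtrees are isomorphic to T_j. Then for every real number λ, the multiplicity of λ as an adjacency eigenvalue of T_0 is at least ∑_{j=1}^{k} (α_j - 1)·μ(T_j, λ), where μ(T_j, λ) is the multiplicity of λ as an adjacency eigenvalue of T_j. -/

import Mathlib

/-! If `x` is a generalized `λ`-eigenvector of `T_j`, then `x` on one copy of `T_j`, `-x` on another
copy and `0` elsewhere is a generalized `λ`-eigenvector of `T_0`: the new root sees
`x(r_j) - x(r_j) = 0`. Pairing copy `0` of `T_j` with each of its copies `1, …, α_j - 1` embeds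
`α_j - 1` copies of the generalized eigenspace of `T_j`, for every `j`, injectively into that of
`T_0`, and for any matrix the dimension of the generalized `λ`-eigenspace is the multiplicity of `λ`
as a root of the characteristic polynomial. -/

open Polynomial

/-- The multiplicity of `lam` as a root of the characteristic polynomial of the
adjacency matrix of the graph `H` (over `ℝ`). -/
noncomputable def specMul {W : Type} [Fintype W] (H : SimpleGraph W) (lam : ℝ) : ℕ :=
  letI := Classical.decEq W
  letI : DecidableRel H.Adj := Classical.decRel _
  (Matrix.charpoly (Matrix.of fun a b : W => if H.Adj a b then (1 : ℝ) else 0)).rootMultiplicity lam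

/-- The relation generating the merged tree `T₀`: a new root (`none`) is joined to the
roots of `α j` disjoint copies of the tree `G j`, for each `j`; inside each copy the
edges are those of the corresponding `G j`. -/
def mergedRel {k : ℕ} (V : Fin k → Type) (G : ∀ j, SimpleGraph (V j)) (r : ∀ j, V j)
    (α : Fin k → ℕ) :
    Option ((j : Fin k) × (Fin (α j) × V j)) → Option ((j : Fin k) × (Fin (α j) × V j)) → Prop
  | none, some ⟨j, _, v⟩ => v = r j
  | some ⟨j, i, v⟩, some ⟨j', i', v'⟩ => ∃ h : j = j', h ▸ i = i' ∧ (G j').Adj (h ▸ v) v'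
  | _, _ => False

/-- The merged rooted tree, as a simple graph. -/
def mergedGraph {k : ℕ} (V : Fin k → Type) (G : ∀ j, SimpleGraph (V j)) (r : ∀ j, V j)
    (α : Fin k → ℕ) : SimpleGraph (Option ((j : Fin k) × (Fin (α j) × V j))) :=
  SimpleGraph.fromRel (mergedRel V G r α)

open Module Function Matrix

theorem specMul_eq_rootMultiplicity {W : Type} [Fintype W] [DecidableEq W] (H : SimpleGraph W)
    [DecidableRel H.Adj] (lam : ℝ) :
    specMul H lam = (H.adjMatrix ℝ).charpoly.rootMultiplicity lam := by
  unfold specMul SimpleGraph.adjMatrix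
  congr!

section Intertwining
variable {K N : Type*} [Field K] [AddCommGroup N] [Module K N]

theorem Module.End.map_mem_maxGenEigenspace {M : Type*} [AddCommGroup M] [Module K M]
    {f : End K M} {g : End K N} {Φ : M →ₗ[K] N} (h : g ∘ₗ Φ = Φ ∘ₗ f) {μ : K} {x : M}
    (hx : x ∈ f.maxGenEigenspace μ) : Φ x ∈ g.maxGenEigenspace μ := by
  obtain ⟨n, hn⟩ := (f.mem_maxGenEigenspace μ x).mp hx
  have hshift : (g - μ • 1) ∘ₗ Φ = Φ ∘ₗ (f - μ • 1) := by
    ext x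
    simpa using congrArg (· x) h
  refine (g.mem_maxGenEigenspace μ _).mpr ⟨n, ?_⟩
  rw [← LinearMap.comp_apply, Module.End.commute_pow_left_of_commute hshift, LinearMap.comp_apply,
    hn, map_zero]

theorem sum_rootMultiplicity_charpoly_le_of_intertwining [FiniteDimensional K N]
    {ι : Type*} [Fintype ι] {M : ι → Type*} [∀ i, AddCommGroup (M i)] [∀ i, Module K (M i)]
    [∀ i, FiniteDimensional K (M i)] (f : ∀ i, End K (M i)) (g : End K N)
    (Φ : ∀ i, M i →ₗ[K] N) (hΦ : ∀ i, g ∘ₗ Φ i = Φ i ∘ₗ f i)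
    (hinj : Injective fun x : ∀ i, M i => ∑ i, Φ i (x i)) (μ : K) :
    ∑ i, (f i).charpoly.rootMultiplicity μ ≤ g.charpoly.rootMultiplicity μ := by
  let Ψ : (∀ i, (f i).maxGenEigenspace μ) →ₗ[K] g.maxGenEigenspace μ :=
    LinearMap.codRestrict _ (∑ i, Φ i ∘ₗ Submodule.subtype _ ∘ₗ LinearMap.proj i) fun x => by
      simpa using Submodule.sum_mem _ fun i _ => Module.End.map_mem_maxGenEigenspace (hΦ i) (x i).2
  have hΨ : Injective Ψ := fun x y hxy =>
    funext fun i => Subtype.ext <| congrFun (hinj (by simpa [Ψ] using congrArg Subtype.val hxy)) i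
  simp_rw [← LinearMap.finrank_maxGenEigenspace_eq, ← Module.finrank_pi_fintype]
  exact LinearMap.finrank_le_finrank_of_injective hΨ

end Intertwining

namespace SimpleGraph
variable {R U W : Type*} [CommRing R] [Fintype U] [Fintype W] {G : SimpleGraph U}
  {H : SimpleGraph W} [DecidableRel G.Adj] [DecidableRel H.Adj]

theorem adjMatrix_mulVec_extendByZero {e : U → W} (he : Injective e) (x : U → R) (w : W) :
    (H.adjMatrix R *ᵥ ExtendByZero.linearMap R e x) w =
      ∑ u, if H.Adj w (e u) then x u else 0 := by
  simp only [mulVec, dotProduct, adjMatrix_apply, ite_mul, one_mul, zero_mul,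
    ExtendByZero.linearMap_apply]
  refine (Fintype.sum_of_injective e he _ _ (fun w' hw' => ?_) fun u => ?_).symm
  · rw [extend_apply' _ _ _ (by simpa using hw'), Pi.zero_apply, ite_self]
  · rw [he.extend_apply]

theorem toLin'_adjMatrix_comp_extendByZero_sub [DecidableEq U] [DecidableEq W] (e₁ e₂ : G ↪g H)
    (hdisj : ∀ u u', e₁ u ≠ e₂ u') (hnadj : ∀ u u', ¬ H.Adj (e₁ u) (e₂ u'))
    (hout : ∀ w, w ∉ Set.range e₁ → w ∉ Set.range e₂ → ∀ u, H.Adj w (e₁ u) ↔ H.Adj w (e₂ u)) :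
    (H.adjMatrix R).toLin' ∘ₗ (ExtendByZero.linearMap R e₁ - ExtendByZero.linearMap R e₂) =
      (ExtendByZero.linearMap R e₁ - ExtendByZero.linearMap R e₂) ∘ₗ (G.adjMatrix R).toLin' := by
  refine LinearMap.ext fun x => funext fun w => ?_
  simp only [LinearMap.comp_apply, LinearMap.sub_apply, ExtendByZero.linearMap_apply, toLin'_apply,
    mulVec_sub, Pi.sub_apply, adjMatrix_mulVec_extendByZero e₁.injective,
    adjMatrix_mulVec_extendByZero e₂.injective]
  by_cases h₁ : w ∈ Set.range e₁
  · obtain ⟨u, rfl⟩ := h₁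
    rw [e₁.injective.extend_apply, extend_apply' _ _ _ fun ⟨u', h⟩ => hdisj u u' h.symm]
    simp only [e₁.map_adj_iff, hnadj, if_false, Finset.sum_const_zero, sub_zero, Pi.zero_apply,
      mulVec, dotProduct, adjMatrix_apply, ite_mul, one_mul, zero_mul]
  by_cases h₂ : w ∈ Set.range e₂
  · obtain ⟨u, rfl⟩ := h₂
    rw [e₂.injective.extend_apply, extend_apply' _ _ _ fun ⟨u', h⟩ => hdisj u' u h]
    simp only [e₂.map_adj_iff, fun u' => H.adj_comm (e₂ u) (e₁ u'), hnadj, if_false,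
      Finset.sum_const_zero, zero_sub, Pi.zero_apply, mulVec, dotProduct, adjMatrix_apply, ite_mul,
      one_mul, zero_mul]
  simp only [extend_apply' _ _ _ h₁, extend_apply' _ _ _ h₂, hout w h₁ h₂, sub_self]

end SimpleGraph

section MergedGraph
variable {k : ℕ} {V : Fin k → Type} {G : ∀ j, SimpleGraph (V j)} {r : ∀ j, V j} {α : Fin k → ℕ}

theorem mergedGraph_adj_none_some {j : Fin k} {c : Fin (α j)} {v : V j} :
    (mergedGraph V G r α).Adj none (some ⟨j, c, v⟩) ↔ v = r j := by
  simp [mergedGraph, mergedRel]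

theorem mergedGraph_adj_some_some {j : Fin k} {c c' : Fin (α j)} {v v' : V j} :
    (mergedGraph V G r α).Adj (some ⟨j, c, v⟩) (some ⟨j, c', v'⟩) ↔ c = c' ∧ (G j).Adj v v' := by
  simp only [mergedGraph, mergedRel, SimpleGraph.fromRel_adj, ne_eq, Option.some.injEq,
    Sigma.mk.inj_iff, heq_eq_eq, Prod.mk.injEq, true_and, exists_const]
  constructor
  · rintro ⟨-, h | ⟨rfl, h⟩⟩
    exacts [h, ⟨rfl, h.symm⟩]
  · rintro ⟨rfl, h⟩
    exact ⟨fun hv => h.ne hv.2, Or.inl ⟨rfl, h⟩⟩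

theorem not_mergedGraph_adj_of_ne {j j' : Fin k} (h : j ≠ j') (c : Fin (α j)) (c' : Fin (α j'))
    (v : V j) (v' : V j') : ¬ (mergedGraph V G r α).Adj (some ⟨j, c, v⟩) (some ⟨j', c', v'⟩) := by
  rw [mergedGraph, SimpleGraph.fromRel_adj]
  rintro ⟨-, ⟨rfl, -⟩ | ⟨he, -⟩⟩
  exacts [h rfl, h he.symm]

variable (G r) in
def mergedCopy (j : Fin k) (c : Fin (α j)) : G j ↪g mergedGraph V G r α where
  toFun v := some ⟨j, c, v⟩
  inj' _ _ h := by simpa using h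
  map_rel_iff' := mergedGraph_adj_some_some.trans (and_iff_right rfl)

@[simp]
theorem mergedCopy_apply (j : Fin k) (c : Fin (α j)) (v : V j) :
    mergedCopy G r j c v = some ⟨j, c, v⟩ := rfl

theorem mergedCopy_eq_mergedCopy {j j' : Fin k} {c : Fin (α j)} {c' : Fin (α j')} {v : V j}
    {v' : V j'} (h : mergedCopy G r j c v = mergedCopy G r j' c' v') : j = j' ∧ (c : ℕ) = c' := by
  simpa using congrArg (Option.map fun s => (s.1, (s.2.1 : ℕ))) h

/-- The pair `⟨j, i⟩` stands for the twin copies `0` and `i + 1` of `G j`. -/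
def twinFst (p : (j : Fin k) × Fin (α j - 1)) : Fin (α p.1) :=
  ⟨0, by have := p.2.isLt; omega⟩

def twinSnd (p : (j : Fin k) × Fin (α j - 1)) : Fin (α p.1) :=
  ⟨p.2 + 1, by have := p.2.isLt; omega⟩

variable (G r)

noncomputable def twinDiff (p : (j : Fin k) × Fin (α j - 1)) :
    (V p.1 → ℝ) →ₗ[ℝ] (Option ((j : Fin k) × (Fin (α j) × V j)) → ℝ) :=
  ExtendByZero.linearMap ℝ (mergedCopy G r p.1 (twinFst p)) -
    ExtendByZero.linearMap ℝ (mergedCopy G r p.1 (twinSnd p))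

theorem toLin'_adjMatrix_comp_twinDiff [∀ j, Fintype (V j)] [∀ j, DecidableEq (V j)]
    [∀ j, DecidableRel (G j).Adj] [DecidableRel (mergedGraph V G r α).Adj]
    (p : (j : Fin k) × Fin (α j - 1)) :
    ((mergedGraph V G r α).adjMatrix ℝ).toLin' ∘ₗ twinDiff G r p =
      twinDiff G r p ∘ₗ ((G p.1).adjMatrix ℝ).toLin' := by
  refine SimpleGraph.toLin'_adjMatrix_comp_extendByZero_sub _ _ (fun u u' h => ?_)
    (fun u u' h => ?_) fun w h₁ h₂ u => ?_
  · simp [twinFst, twinSnd] at h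
  · simp [mergedGraph_adj_some_some, twinFst, twinSnd, Fin.ext_iff] at h
  · rcases w with _ | ⟨j, c, v⟩
    · simp only [mergedCopy_apply, mergedGraph_adj_none_some]
    by_cases hj : j = p.1
    · subst hj
      have hc₁ : c ≠ twinFst p := fun hc => h₁ ⟨v, by rw [mergedCopy_apply, hc]⟩
      have hc₂ : c ≠ twinSnd p := fun hc => h₂ ⟨v, by rw [mergedCopy_apply, hc]⟩
      simp only [mergedCopy_apply, mergedGraph_adj_some_some, hc₁, hc₂, false_and]
    · simp only [mergedCopy_apply]
      exact iff_of_false (not_mergedGraph_adj_of_ne hj _ _ _ _)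
        (not_mergedGraph_adj_of_ne hj _ _ _ _)

theorem sum_twinDiff_apply_twinSnd (x : ∀ p : (j : Fin k) × Fin (α j - 1), V p.1 → ℝ)
    (p : (j : Fin k) × Fin (α j - 1)) (v : V p.1) :
    (∑ q, twinDiff G r q (x q)) (mergedCopy G r p.1 (twinSnd p) v) = -x p v := by
  have hFst (q : (j : Fin k) × Fin (α j - 1)) :
      mergedCopy G r p.1 (twinSnd p) v ∉ Set.range (mergedCopy G r q.1 (twinFst q)) :=
    fun ⟨u, hu⟩ => by simpa [twinFst, twinSnd] using (mergedCopy_eq_mergedCopy hu).2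
  have hSnd (q : (j : Fin k) × Fin (α j - 1)) (hq : q ≠ p) :
      mergedCopy G r p.1 (twinSnd p) v ∉ Set.range (mergedCopy G r q.1 (twinSnd q)) := by
    rintro ⟨u, hu⟩
    obtain ⟨hj, hi⟩ := mergedCopy_eq_mergedCopy hu
    obtain ⟨j, i⟩ := q
    obtain ⟨j', i'⟩ := p
    dsimp only at hj
    subst hj
    exact hq (by simpa [twinSnd, Fin.ext_iff] using hi)
  rw [Finset.sum_apply, Finset.sum_eq_single_of_mem p (Finset.mem_univ _) fun q _ hq => ?_]
  · simp only [twinDiff, LinearMap.sub_apply, Pi.sub_apply, ExtendByZero.linearMap_apply,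
      (mergedCopy G r p.1 (twinSnd p)).injective.extend_apply, extend_apply' _ _ _ (hFst p),
      Pi.zero_apply, zero_sub]
  · simp only [twinDiff, LinearMap.sub_apply, Pi.sub_apply, ExtendByZero.linearMap_apply,
      extend_apply' _ _ _ (hFst q), extend_apply' _ _ _ (hSnd q hq), sub_self]

theorem injective_sum_twinDiff :
    Injective fun x : ∀ p : (j : Fin k) × Fin (α j - 1), V p.1 → ℝ => ∑ p, twinDiff G r p (x p) :=
  fun x y hxy => funext fun p => funext fun v => neg_injective <| by
    simpa only [sum_twinDiff_apply_twinSnd] using congrFun hxy (mergedCopy G r p.1 (twinSnd p) v)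

end MergedGraph

theorem stmt_18_general {k : ℕ} (V : Fin k → Type) [∀ j, Fintype (V j)]
    (G : ∀ j, SimpleGraph (V j)) (r : ∀ j, V j)
    (α : Fin k → ℕ) (lam : ℝ) :
    ∑ j, (α j - 1) * specMul (G j) lam ≤ specMul (mergedGraph V G r α) lam := by
  classical
  have key := sum_rootMultiplicity_charpoly_le_of_intertwining
    (fun p : (j : Fin k) × Fin (α j - 1) => ((G p.1).adjMatrix ℝ).toLin')
    ((mergedGraph V G r α).adjMatrix ℝ).toLin' (twinDiff G r) (toLin'_adjMatrix_comp_twinDiff G r)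
    (injective_sum_twinDiff G r) lam
  calc ∑ j, (α j - 1) * specMul (G j) lam = ∑ j, ∑ _i : Fin (α j - 1), specMul (G j) lam := by simp
    _ ≤ _ := by
      simpa only [charpoly_toLin', ← specMul_eq_rootMultiplicity, Fintype.sum_sigma] using key

theorem stmt_18 {k : ℕ} (V : Fin k → Type) [∀ j, Fintype (V j)]
    (G : ∀ j, SimpleGraph (V j)) (hT : ∀ j, (G j).IsTree) (r : ∀ j, V j)
    (α : Fin k → ℕ) (hα : ∀ j, 0 < α j) (lam : ℝ) :
    ∑ j, (α j - 1) * specMul (G j) lam ≤ specMul (mergedGraph V G r α) lam :=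
  stmt_18_general V G r α lam
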